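/- Let q : Fin 16 × Fin 4 → ℝ be nonnegative with total sum 1 as in the non-strong surrogate type model. Define γ₁, ACE = ACE(T→Y), pY = P(Y=1|T=0) and e = P(S=0|T=1) as linear functionals of q in the standard way. If γ₁ > pY + e, then ACE > 0. -/

import Mathlib

/- Non-strong surrogate potential-outcome-type model: `q (i, j)` is the proportion of the
type with `(Y₀₀, Y₀₁, Y₁₀, Y₁₁)` given by the binary expansion of `i` (most significant
bit first) and `(S₀, S₁)` given by the binary expansion of `j`. -/

/-- Indicator of `Y₀₀ = 1` for type `i`. -/
def y00 (i : Fin 16) : ℝ := if i.val / 8 = 1 then 1 else 0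
/-- Indicator of `Y₀₁ = 1` for type `i`. -/
def y01 (i : Fin 16) : ℝ := if i.val / 4 % 2 = 1 then 1 else 0
/-- Indicator of `Y₁₀ = 1` for type `i`. -/
def y10 (i : Fin 16) : ℝ := if i.val / 2 % 2 = 1 then 1 else 0
/-- Indicator of `Y₁₁ = 1` for type `i`. -/
def y11 (i : Fin 16) : ℝ := if i.val % 2 = 1 then 1 else 0
/-- Indicator of `S₀ = 1` for type `j`. -/
def s0 (j : Fin 4) : ℝ := if j.val / 2 = 1 then 1 else 0
/-- Indicator of `S₁ = 1` for type `j`. -/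
def s1 (j : Fin 4) : ℝ := if j.val % 2 = 1 then 1 else 0

/-- `γ₁ = P(Y₁₁ = 1) - P(Y₁₀ = 1)`, the effect of `S` on `Y` under `T = 1`. -/
noncomputable def gamma1 (q : Fin 16 × Fin 4 → ℝ) : ℝ :=
  ∑ i : Fin 16, ∑ j : Fin 4, (y11 i - y10 i) * q (i, j)

/-- `P(Y=1 | T=0) = P(Y_{0,S₀} = 1)`. -/
noncomputable def pY0 (q : Fin 16 × Fin 4 → ℝ) : ℝ :=
  ∑ i : Fin 16, ∑ j : Fin 4, ((1 - s0 j) * y00 i + s0 j * y01 i) * q (i, j)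

/-- `P(Y=1 | T=1) = P(Y_{1,S₁} = 1)`. -/
noncomputable def pY1 (q : Fin 16 × Fin 4 → ℝ) : ℝ :=
  ∑ i : Fin 16, ∑ j : Fin 4, ((1 - s1 j) * y10 i + s1 j * y11 i) * q (i, j)

/-- `ACE(T → Y)`. -/
noncomputable def aceTY (q : Fin 16 × Fin 4 → ℝ) : ℝ := pY1 q - pY0 q

/-- `P(S=0 | T=1) = P(S₁ = 0)`. -/
noncomputable def pS0T1 (q : Fin 16 × Fin 4 → ℝ) : ℝ :=
  ∑ i : Fin 16, ∑ j : Fin 4, (1 - s1 j) * q (i, j)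

/-- `ACE(T → S) = P(S₁ = 1) - P(S₀ = 1)`. -/
noncomputable def aceTS (q : Fin 16 × Fin 4 → ℝ) : ℝ :=
  ∑ i : Fin 16, ∑ j : Fin 4, (s1 j - s0 j) * q (i, j)

/- Type by type, `Y_{1,S₁} ≥ Y₁₁ - Y₁₀ - (1 - S₁)`; averaging gives
`P(Y=1 | T=1) ≥ γ₁ - P(S=0 | T=1) > P(Y=1 | T=0)`. -/

lemma y10_nonneg (i : Fin 16) : 0 ≤ y10 i := by
  unfold y10; split_ifs <;> norm_num

lemma y11_le_one (i : Fin 16) : y11 i ≤ 1 := by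
  unfold y11; split_ifs <;> norm_num

lemma s1_le_one (j : Fin 4) : s1 j ≤ 1 := by
  unfold s1; split_ifs <;> norm_num

-- The gap is `(2 - s) * b + (1 - s) * (1 - a)`.
lemma sub_sub_one_sub_le_one_sub_mul_add_mul {a b s : ℝ} (ha : a ≤ 1) (hb : 0 ≤ b) (hs : s ≤ 1) :
    (a - b) - (1 - s) ≤ (1 - s) * b + s * a := by
  nlinarith [mul_nonneg (sub_nonneg.2 hs) (sub_nonneg.2 ha)]

lemma gamma1_sub_pS0T1_le_pY1 (q : Fin 16 × Fin 4 → ℝ) (hq : ∀ p, 0 ≤ q p) :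
    gamma1 q - pS0T1 q ≤ pY1 q := by
  unfold gamma1 pS0T1 pY1
  simp only [← Finset.sum_sub_distrib, ← sub_mul]
  gcongr with i _ j _
  · exact hq (i, j)
  · exact sub_sub_one_sub_le_one_sub_mul_add_mul (y11_le_one i) (y10_nonneg i) (s1_le_one j)

theorem stmt7_general (q : Fin 16 × Fin 4 → ℝ) (hq : ∀ p, 0 ≤ q p)
    (hcrit : gamma1 q > pY0 q + pS0T1 q) :
    aceTY q > 0 := by
  have hpY1 := gamma1_sub_pS0T1_le_pY1 q hq
  unfold aceTY
  linarith

theorem stmt7 (q : Fin 16 × Fin 4 → ℝ) (hq : ∀ p, 0 ≤ q p)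
    (hsum : ∑ p : Fin 16 × Fin 4, q p = 1)
    (hcrit : gamma1 q > pY0 q + pS0T1 q) :
    aceTY q > 0 :=
  stmt7_general q hq hcrit
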